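/- Equivalence of continuous L_p seminorm and discrete ℓ_p norm of finite differences for splines: Let n ≥ 1, h > 0, p > 0, K ∈ ℕ, and f = Σ_{k=0}^{K−1} c_k β_{n,h}(· − hk). Then the n-th derivative D^n f (defined almost everywhere; it is piecewise constant on the grid hℤ) satisfies ‖D^n f‖_{L_p} = h^{−(n − 1/p)} ‖d^n * c‖_{ℓ_p}, where d^n is the n-th order finite-difference sequence given by d^n_j = (−1)^j · binomial(n, j) for j = 0, …, n, and (d^n * c)_k = Σ_j d^n_j c_{k−j}. -/

import Mathlib

/-!
`βₘ₊₁` is the moving average `s ↦ ∫_{s-1}^{s} βₘ`, so `βₘ₊₁' = βₘ - βₘ(· - 1)` wherever `βₘ` is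
continuous. Summation by parts moves this difference onto the coefficients: differentiating
`Σ_k a_k βₘ₊₁(· - k)` gives `Σ_k (∇a)_k βₘ(· - k)` with `(∇a)_k = a_k - a_{k-1}`. Hence, off the
grid `hℤ`, `Dⁿf` is the step function equal to `h⁻ⁿ (∇ⁿc)_k` on `[hk, h(k+1))`, whose `p`-th power
integrates to `h^{1-np} Σ_k |(∇ⁿc)_k|^p`; and `∇ⁿc = dⁿ * c` is the binomial expansion of
`(1 - shift)ⁿ`.
-/

open MeasureTheory Real Filter Topology

/-- Causal polynomial B-spline of degree `n`: `β₀ = 𝟙_{[0,1)}` and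
`βₙ = β_{n−1} * β₀` (convolution), supported on `[0, n+1]`. -/
noncomputable def bspline : ℕ → ℝ → ℝ
  | 0 => Set.indicator (Set.Ico (0 : ℝ) 1) (fun _ => (1 : ℝ))
  | n + 1 => fun s =>
      ∫ u : ℝ, bspline n (s - u) * Set.indicator (Set.Ico (0 : ℝ) 1) (fun _ => (1 : ℝ)) u

open Function

lemma bspline_zero_apply (s : ℝ) : bspline 0 s = Set.indicator (Set.Ico 0 1) 1 s := rfl

lemma bspline_succ (n : ℕ) (s : ℝ) : bspline (n + 1) s = ∫ t in (s - 1)..s, bspline n t := by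
  have hmul : ∀ u, bspline n (s - u) * Set.indicator (Set.Ico (0 : ℝ) 1) (fun _ => 1) u
      = Set.indicator (Set.Ico 0 1) (fun u => bspline n (s - u)) u := by
    intro u
    by_cases hu : u ∈ Set.Ico (0 : ℝ) 1 <;> simp [hu]
  simp only [bspline, hmul]
  rw [integral_indicator measurableSet_Ico,
    setIntegral_congr_set Ico_ae_eq_Ioc, ← intervalIntegral.integral_of_le zero_le_one,
    intervalIntegral.integral_comp_sub_left (fun t => bspline n t) s, sub_zero]

lemma support_bspline_subset (n : ℕ) : support (bspline n) ⊆ Set.Icc 0 (n + 1) := by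
  induction n with
  | zero =>
    intro s hs
    have := Set.support_indicator_subset hs
    simpa using Set.Ico_subset_Icc_self this
  | succ n ih =>
    intro s hs
    by_contra hs'
    refine hs ?_
    have hzero : Set.EqOn (bspline n) 0 (Set.uIcc (s - 1) s) := by
      intro t ht
      refine notMem_support.mp fun ht' => hs' ?_
      rw [Set.uIcc_of_le (by linarith)] at ht
      obtain ⟨ht₁, ht₂⟩ := ih ht'
      constructor <;> push_cast <;> linarith [ht.1, ht.2]
    rw [bspline_succ, intervalIntegral.integral_congr hzero]
    simp

lemma hasCompactSupport_bspline (n : ℕ) : HasCompactSupport (bspline n) :=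
  .of_support_subset_isCompact isCompact_Icc (support_bspline_subset n)

lemma continuous_integral_sub_one {g : ℝ → ℝ} (hg : Integrable g) :
    Continuous fun s => ∫ t in (s - 1)..s, g t := by
  have hprim := intervalIntegral.continuous_primitive
    (fun a b => hg.intervalIntegrable (a := a) (b := b)) 0
  refine (hprim.sub (hprim.comp (continuous_sub_right 1))).congr fun s => ?_
  exact intervalIntegral.integral_interval_sub_left hg.intervalIntegrable hg.intervalIntegrable

lemma hasDerivAt_integral_sub_one {g : ℝ → ℝ} (hg : Integrable g) {s : ℝ}
    (hs : ContinuousAt g s) (hs₁ : ContinuousAt g (s - 1)) :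
    HasDerivAt (fun s => ∫ t in (s - 1)..s, g t) (g s - g (s - 1)) s := by
  have hprim : ∀ b, ContinuousAt g b → HasDerivAt (fun u => ∫ t in (0 : ℝ)..u, g t) (g b) b :=
    fun b hb => intervalIntegral.integral_hasDerivAt_right hg.intervalIntegrable
      hg.aestronglyMeasurable.stronglyMeasurableAtFilter hb
  refine ((hprim s hs).sub ((hprim _ hs₁).comp_sub_const s 1)).congr_of_eventuallyEq
    (.of_forall fun u => ?_)
  exact (intervalIntegral.integral_interval_sub_left
    hg.intervalIntegrable hg.intervalIntegrable).symm

lemma integrable_bspline : ∀ n, Integrable (bspline n)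
  | 0 => (integrable_indicator_iff measurableSet_Ico).2 (integrableOn_const measure_Ico_lt_top.ne)
  | n + 1 => by
    rw [funext (bspline_succ n)]
    exact (continuous_integral_sub_one (integrable_bspline n)).integrable_of_hasCompactSupport
      (funext (bspline_succ n) ▸ hasCompactSupport_bspline (n + 1))

lemma continuous_bspline_succ (n : ℕ) : Continuous (bspline (n + 1)) := by
  rw [funext (bspline_succ n)]
  exact continuous_integral_sub_one (integrable_bspline n)

lemma continuousAt_bspline {n : ℕ} {s : ℝ} (hs : ∀ k : ℤ, s ≠ k) :
    ContinuousAt (bspline n) s := by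
  cases n with
  | zero =>
    refine continuousOn_const.continuousAt_indicator ?_
    rw [frontier_Ico zero_lt_one]
    rintro (h | h)
    · exact hs 0 (by simpa using h)
    · exact hs 1 (by simpa using h)
  | succ n => exact (continuous_bspline_succ n).continuousAt

lemma hasDerivAt_bspline_succ (n : ℕ) {s : ℝ} (hs : ContinuousAt (bspline n) s)
    (hs₁ : ContinuousAt (bspline n) (s - 1)) :
    HasDerivAt (bspline (n + 1)) (bspline n s - bspline n (s - 1)) s := by
  rw [funext (bspline_succ n)]
  exact hasDerivAt_integral_sub_one (integrable_bspline n) hs hs₁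

lemma integral_bspline_zero : ∫ s, bspline 0 s = 1 := by
  simp [bspline_zero_apply, integral_indicator measurableSet_Ico]

lemma bspline_zero_sub_intCast (y : ℝ) (k : ℤ) :
    bspline 0 (y - k) = if k = ⌊y⌋ then 1 else 0 := by
  rw [bspline_zero_apply]
  split_ifs with hk
  · rw [hk, ← Int.fract,
      Set.indicator_of_mem (Set.mem_Ico.mpr ⟨Int.fract_nonneg y, Int.fract_lt_one y⟩),
      Pi.one_apply]
  · refine Set.indicator_of_notMem (fun hmem => hk ?_) _
    obtain ⟨h₁, h₂⟩ := Set.mem_Ico.mp hmem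
    exact (Int.floor_eq_iff.mpr ⟨by linarith, by linarith⟩).symm

def bwdDiff (a : ℤ → ℝ) (k : ℤ) : ℝ := a k - a (k - 1)

lemma hasFiniteSupport_bwdDiff {a : ℤ → ℝ} (ha : a.HasFiniteSupport) :
    (bwdDiff a).HasFiniteSupport :=
  ha.sub (ha.fun_comp_of_injective (sub_left_injective (b := 1)))

lemma hasFiniteSupport_bwdDiff_iterate {a : ℤ → ℝ} (ha : a.HasFiniteSupport) (m : ℕ) :
    (bwdDiff^[m] a).HasFiniteSupport := by
  induction m with
  | zero => exact ha
  | succ m ih => rw [iterate_succ_apply']; exact hasFiniteSupport_bwdDiff ih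

open fwdDiff in
lemma bwdDiff_iterate_apply (a : ℤ → ℝ) (m : ℕ) (k : ℤ) :
    bwdDiff^[m] a k =
      ∑ j ∈ Finset.range (m + 1), (-1) ^ j * (m.choose j : ℝ) * a (k - j) := by
  have hneg : bwdDiff = fun b => (-1 : ℤ) • Δ_[-1] b := by
    ext b k; simp [bwdDiff, fwdDiff, sub_eq_add_neg, add_comm]
  have hiter : bwdDiff^[m] a = (-1 : ℤ) ^ m • (Δ_[-1])^[m] a := by
    induction m with
    | zero => simp
    | succ m ih =>
      rw [iterate_succ_apply', ih, iterate_succ_apply', hneg]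
      simp only [fwdDiff_const_smul, smul_smul, pow_succ']
  rw [hiter, Pi.smul_apply, fwdDiff_iter_eq_sum_shift, Finset.smul_sum]
  refine Finset.sum_congr rfl fun j hj => ?_
  have hj : j ≤ m := Nat.lt_succ_iff.mp (Finset.mem_range.mp hj)
  rw [smul_smul, ← mul_assoc, ← pow_add, show m + (m - j) = j + 2 * (m - j) by omega, pow_add,
    pow_mul]
  simp [sub_eq_add_neg]

noncomputable def cardinalSpline (m : ℕ) (a : ℤ → ℝ) (y : ℝ) : ℝ :=
  ∑ᶠ k : ℤ, a k * bspline m (y - k)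

lemma cardinalSpline_eq_sum {m : ℕ} {a : ℤ → ℝ} {s : Finset ℤ} (hs : support a ⊆ s) (y : ℝ) :
    cardinalSpline m a y = ∑ k ∈ s, a k * bspline m (y - k) :=
  finsum_eq_sum_of_support_subset _ ((support_mul_subset_left _ _).trans hs)

lemma cardinalSpline_zero (a : ℤ → ℝ) (y : ℝ) : cardinalSpline 0 a y = a ⌊y⌋ := by
  rw [cardinalSpline, finsum_eq_single _ ⌊y⌋ fun k hk => by simp [bspline_zero_sub_intCast, hk]]
  rw [bspline_zero_sub_intCast, if_pos rfl, mul_one]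

lemma cardinalSpline_bwdDiff {a : ℤ → ℝ} (ha : a.HasFiniteSupport) (m : ℕ) (y : ℝ) :
    cardinalSpline m (bwdDiff a) y =
      ∑ᶠ k : ℤ, a k * (bspline m (y - k) - bspline m (y - k - 1)) := by
  have hshift :
      ∑ᶠ k : ℤ, a (k - 1) * bspline m (y - k) = ∑ᶠ k : ℤ, a k * bspline m (y - k - 1) := by
    rw [← finsum_comp_equiv (Equiv.addRight 1)]
    simp [sub_sub]
  simp only [cardinalSpline, bwdDiff, sub_mul, mul_sub]
  rw [finsum_sub_distrib (ha.fun_mul_left _)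
      ((ha.fun_comp_of_injective (sub_left_injective (b := 1))).fun_mul_left _),
    finsum_sub_distrib (ha.fun_mul_left _) (ha.fun_mul_left _), hshift]

lemma hasDerivAt_cardinalSpline_succ {m : ℕ} {a : ℤ → ℝ} (ha : a.HasFiniteSupport) {y : ℝ}
    (hy : ∀ k : ℤ, ContinuousAt (bspline m) (y - k)) :
    HasDerivAt (cardinalSpline (m + 1) a) (cardinalSpline m (bwdDiff a) y) y := by
  have hfin : (support a).Finite := ha
  have hs : support a ⊆ hfin.toFinset := hfin.coe_toFinset.superset
  rw [cardinalSpline_bwdDiff ha, finsum_eq_sum_of_support_subset _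
    ((support_mul_subset_left _ _).trans hs), funext (cardinalSpline_eq_sum hs)]
  refine HasDerivAt.fun_sum fun k _ => .const_mul _ ?_
  refine (hasDerivAt_bspline_succ m (hy k) ?_).comp_sub_const y k
  simpa [sub_sub] using hy (k + 1)

lemma hasDerivAt_cardinalSpline_succ_comp_div {m : ℕ} {a : ℤ → ℝ} (ha : a.HasFiniteSupport)
    (h : ℝ) {x : ℝ} (hx : ∀ k : ℤ, ContinuousAt (bspline m) (x / h - k)) :
    HasDerivAt (fun x => cardinalSpline (m + 1) a (x / h))
      (h⁻¹ * cardinalSpline m (bwdDiff a) (x / h)) x := by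
  simpa [Function.comp_def, mul_comm, div_eq_mul_inv] using
    (hasDerivAt_cardinalSpline_succ ha hx).comp x ((hasDerivAt_id x).div_const h)

/- The target degree `ν + 1` is kept positive so that every intermediate spline is differentiable
everywhere: iterating `deriv` needs the identity as functions, not just off the grid. -/
lemma deriv_iterate_cardinalSpline_comp_div {a : ℤ → ℝ} (ha : a.HasFiniteSupport) (h : ℝ)
    (m ν : ℕ) : deriv^[m] (fun x => cardinalSpline (m + ν + 1) a (x / h))
      = fun x => (h ^ m)⁻¹ * cardinalSpline (ν + 1) (bwdDiff^[m] a) (x / h) := by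
  induction m generalizing ν with
  | zero => simp
  | succ m ih =>
    ext x
    rw [iterate_succ_apply', show m + 1 + ν + 1 = m + (ν + 1) + 1 by omega, ih (ν + 1),
      ((hasDerivAt_cardinalSpline_succ_comp_div (hasFiniteSupport_bwdDiff_iterate ha m) h
        fun k => (continuous_bspline_succ ν).continuousAt).const_mul _).deriv,
      iterate_succ_apply', pow_succ, mul_inv, mul_assoc]

lemma deriv_iterate_cardinalSpline_comp_div_of_forall_ne {a : ℤ → ℝ} (ha : a.HasFiniteSupport)
    {h x : ℝ} (hx : ∀ k : ℤ, x / h ≠ k) {n : ℕ} (hn : 1 ≤ n) :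
    deriv^[n] (fun x => cardinalSpline n a (x / h)) x = (h ^ n)⁻¹ * bwdDiff^[n] a ⌊x / h⌋ := by
  obtain ⟨m, rfl⟩ := Nat.exists_eq_add_of_le' hn
  have hcont : ∀ k : ℤ, ContinuousAt (bspline 0) (x / h - k) :=
    fun k => continuousAt_bspline fun j hj => hx (j + k) (by push_cast; linarith)
  have hsmooth := deriv_iterate_cardinalSpline_comp_div ha h m 0
  rw [add_zero] at hsmooth
  have hstep :=
    hasDerivAt_cardinalSpline_succ_comp_div (hasFiniteSupport_bwdDiff_iterate ha m) h hcont
  rw [iterate_succ_apply', hsmooth, (hstep.const_mul _).deriv,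
    cardinalSpline_zero, iterate_succ_apply', pow_succ, mul_inv, mul_assoc]

lemma integral_cardinalSpline {a : ℤ → ℝ} (ha : a.HasFiniteSupport) (m : ℕ) :
    ∫ y, cardinalSpline m a y = (∑ᶠ k, a k) * ∫ s, bspline m s := by
  have hfin : (support a).Finite := ha
  have hs : support a ⊆ hfin.toFinset := hfin.coe_toFinset.superset
  simp_rw [cardinalSpline_eq_sum hs, finsum_eq_sum_of_support_subset a hs, Finset.sum_mul]
  rw [integral_finsetSum]
  · simp_rw [integral_const_mul, integral_sub_right_eq_self]
  · exact fun k _ => ((integrable_bspline m).comp_sub_right (k : ℝ)).const_mul _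

lemma integral_comp_floor_div {g : ℤ → ℝ} (hg : g.HasFiniteSupport) {h : ℝ} (hh : 0 < h) :
    ∫ x, g ⌊x / h⌋ = h * ∑ᶠ k, g k := by
  simp_rw [← cardinalSpline_zero]
  rw [Measure.integral_comp_div (cardinalSpline 0 g), integral_cardinalSpline hg,
    integral_bspline_zero, abs_of_pos hh, smul_eq_mul, mul_one]

/-- **Equivalence of continuous `L_p` seminorm and discrete `ℓ_p` norm of finite
differences for splines:** if `f = Σ_{k=0}^{K−1} c_k β_{n,h}(·−hk)` then
`‖Dⁿf‖_{L_p} = h^{−(n−1/p)} ‖dⁿ * c‖_{ℓ_p}`, where `dⁿ_j = (−1)ʲ C(n,j)` and the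
coefficient sequence is extended by zero outside `{0, …, K−1}`. -/
theorem Lp_seminorm_equals_lp_finite_differences
    (n : ℕ) (hn : 1 ≤ n) (h : ℝ) (hh : 0 < h) (p : ℝ) (hp : 0 < p)
    (K : ℕ) (c : ℕ → ℝ) (f : ℝ → ℝ)
    (hf : ∀ x : ℝ, f x = ∑ k ∈ Finset.range K, c k * bspline n (x / h - k))
    -- `c` extended by zero outside `{0, …, K−1}`
    (cext : ℤ → ℝ)
    (hcext : ∀ k : ℤ, cext k = if 0 ≤ k ∧ k < (K : ℤ) then c k.toNat else 0)
    -- the `n`-th order finite-difference sequence `dⁿ_j = (−1)ʲ C(n,j)`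
    (d : ℕ → ℝ) (hd : ∀ j : ℕ, d j = (-1) ^ j * (n.choose j : ℝ))
    -- the discrete convolution `(dⁿ * c)_k = Σ_j dⁿ_j c_{k−j}`
    (dc : ℤ → ℝ)
    (hdc : ∀ k : ℤ, dc k = ∑ j ∈ Finset.range (n + 1), d j * cext (k - j)) :
    (∫ x : ℝ, |deriv^[n] f x| ^ p) ^ (1 / p) =
      h ^ (-((n : ℝ) - 1 / p)) * (∑' k : ℤ, |dc k| ^ p) ^ (1 / p) := by
  have hsupp : support cext ⊆ ((Finset.range K).map Nat.castEmbedding : Finset ℤ) := by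
    intro k hk
    rw [mem_support, hcext] at hk
    split_ifs at hk with hkK
    · simpa using ⟨k.toNat, by omega, by omega⟩
    · exact absurd rfl hk
  have hc : cext.HasFiniteSupport := (Finset.finite_toSet _).subset hsupp
  have hf' : f = fun x => cardinalSpline n cext (x / h) := by
    ext x
    rw [hf, cardinalSpline_eq_sum hsupp, Finset.sum_map]
    refine Finset.sum_congr rfl fun k hk => ?_
    simp [hcext, Finset.mem_range.mp hk]
  have hdc' : dc = bwdDiff^[n] cext := by
    ext k
    simp only [hdc, hd, bwdDiff_iterate_apply]
  have hpow : (fun k => |dc k| ^ p).HasFiniteSupport :=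
    (hdc' ▸ hasFiniteSupport_bwdDiff_iterate hc n).subset fun k hk => by
      contrapose! hk; simp [notMem_support.mp hk, Real.zero_rpow hp.ne']
  have hae : ∀ᵐ x, |deriv^[n] f x| ^ p = ((h ^ n)⁻¹) ^ p * |dc ⌊x / h⌋| ^ p := by
    filter_upwards [(Set.countable_range fun k : ℤ => k * h).ae_notMem volume] with x hx
    have hx' : ∀ k : ℤ, x / h ≠ k :=
      fun k hk => hx ⟨k, by simp only [← hk, div_mul_cancel₀ x hh.ne']⟩
    rw [hf', deriv_iterate_cardinalSpline_comp_div_of_forall_ne hc hx' hn, hdc', abs_mul,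
      Real.mul_rpow (abs_nonneg _) (abs_nonneg _), abs_of_pos (by positivity)]
  rw [integral_congr_ae hae, integral_const_mul, integral_comp_floor_div hpow hh,
    tsum_eq_finsum hpow, ← mul_assoc,
    Real.mul_rpow (by positivity) (finsum_nonneg fun k => by positivity)]
  congr 1
  rw [← Real.rpow_natCast, ← Real.rpow_neg hh.le, ← Real.rpow_mul hh.le,
    ← Real.rpow_add_one hh.ne', ← Real.rpow_mul hh.le]
  congr 1
  field_simp
  ring
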